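/- Let G₁ and G₂ be kernels on R^n_+, each having the reflection properties (P1)–(P3) for every λ > 0, and define the composed kernel G(x, y) = ∫_{R^n_+} G₁(x, z) G₂(z, y) dz, assumed finite for all x ≠ y in R^n_+. Then G has property (P2): for every λ > 0 and all x, y ∈ Σ_λ with x ≠ y, G(x^λ, y^λ) − G(x, y) > |G(x^λ, y) − G(x, y^λ)|. -/

import Mathlib

open MeasureTheory Filter Set Metric
open scoped ENNReal

noncomputable section

variable {n : ℕ}

/-- Reflection of `x` about the hyperplane `x i = lam`. -/
def reflect (i : Fin n) (lam : ℝ) (x : EuclideanSpace ℝ (Fin n)) :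
    EuclideanSpace ℝ (Fin n) :=
  WithLp.toLp 2 (Function.update x i (2 * lam - x i))

/-- The half space `R^n_+ = {x : x i > 0}` (with `i` the last coordinate). -/
def halfSpace (i : Fin n) : Set (EuclideanSpace ℝ (Fin n)) := {x | 0 < x i}

/-- `Σ_λ = {x ∈ R^n_+ : 0 < x i < λ}`. -/
def sigmaSlab (i : Fin n) (lam : ℝ) : Set (EuclideanSpace ℝ (Fin n)) :=
  {x | 0 < x i ∧ x i < lam}

/-- Property (P1) of a kernel. -/
def PropP1 (i : Fin n) (K : EuclideanSpace ℝ (Fin n) → EuclideanSpace ℝ (Fin n) → ℝ) : Prop :=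
  ∀ lam > (0 : ℝ), ∀ x ∈ sigmaSlab i lam, ∀ y ∈ sigmaSlab i lam, x ≠ y →
    max (K (reflect i lam x) y) (K x (reflect i lam y)) <
      K (reflect i lam x) (reflect i lam y)

/-- Property (P2) of a kernel. -/
def PropP2 (i : Fin n) (K : EuclideanSpace ℝ (Fin n) → EuclideanSpace ℝ (Fin n) → ℝ) : Prop :=
  ∀ lam > (0 : ℝ), ∀ x ∈ sigmaSlab i lam, ∀ y ∈ sigmaSlab i lam, x ≠ y →
    |K (reflect i lam x) y - K x (reflect i lam y)| <
      K (reflect i lam x) (reflect i lam y) - K x y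

/-- Property (P3) of a kernel. -/
def PropP3 (i : Fin n) (K : EuclideanSpace ℝ (Fin n) → EuclideanSpace ℝ (Fin n) → ℝ) : Prop :=
  ∀ lam > (0 : ℝ), ∀ x ∈ sigmaSlab i lam, ∀ y : EuclideanSpace ℝ (Fin n),
    0 < y i → lam ≤ y i → y ≠ reflect i lam x →
      K x y < K (reflect i lam x) y ∧ K y x < K y (reflect i lam x)

/-- A kernel has the reflection properties (P1)-(P3). -/
def HasReflProps (i : Fin n) (K : EuclideanSpace ℝ (Fin n) → EuclideanSpace ℝ (Fin n) → ℝ) :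
    Prop :=
  PropP1 i K ∧ PropP2 i K ∧ PropP3 i K

/-! With `G` the composed kernel, `|G(x^λ, y) - G(x, y^λ)| < G(x^λ, y^λ) - G(x, y)` is the pair of
inequalities `0 < ∫ F` for `F z = (G₁(x^λ, z) + G₁(x, z)) (G₂(z, y^λ) - G₂(z, y))` and for its analogue
built from the transposed kernels `G₂ᵀ, G₁ᵀ`, which again satisfy (P2) and (P3). Folding `Σ_λ` onto its
mirror image, `∫ F > 0` follows from `F ≥ 0` beyond `T_λ`, which is (P3), and `F z + F z^λ > 0` on `Σ_λ`:
writing `F z = a b` and `F z^λ = a' b'`, this is `a (b + b') + (a' - a) b' > 0`, where `b + b' > 0` and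
`a' > a` are (P2) for `G₂` and `G₁`, and `b' > 0` is (P3). -/

section Reflection

variable (i : Fin n) (lam : ℝ)

@[simp]
lemma reflect_apply_self (x : EuclideanSpace ℝ (Fin n)) : reflect i lam x i = 2 * lam - x i :=
  Function.update_self i _ _

lemma reflect_apply_of_ne {j : Fin n} (hj : j ≠ i) (x : EuclideanSpace ℝ (Fin n)) :
    reflect i lam x j = x j :=
  Function.update_of_ne hj _ _

lemma reflect_involutive : Function.Involutive (reflect i lam) := by
  intro x
  ext j
  rcases eq_or_ne j i with rfl | hj
  · simp
  · simp only [reflect_apply_of_ne i lam hj]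

@[simp]
lemma reflect_reflect (x : EuclideanSpace ℝ (Fin n)) : reflect i lam (reflect i lam x) = x :=
  reflect_involutive i lam x

lemma isometry_reflect : Isometry (reflect i lam) := by
  refine Isometry.of_dist_eq fun x y => ?_
  simp only [EuclideanSpace.dist_eq]
  congr 1
  refine Finset.sum_congr rfl fun j _ => ?_
  rcases eq_or_ne j i with rfl | hj
  · simp only [reflect_apply_self, Real.dist_eq]
    congr 1
    rw [← abs_neg]
    ring_nf
  · simp only [reflect_apply_of_ne i lam hj]

lemma measurePreserving_reflect : MeasurePreserving (reflect i lam) := by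
  refine ⟨(isometry_reflect i lam).continuous.measurable, ?_⟩
  rw [← EuclideanSpace.euclideanHausdorffMeasure_eq_volume,
    (isometry_reflect i lam).map_euclideanHausdorffMeasure,
    (reflect_involutive i lam).surjective.range_eq, Measure.restrict_univ]

lemma measurableEmbedding_reflect : MeasurableEmbedding (reflect i lam) :=
  (isometry_reflect i lam).isClosedEmbedding.measurableEmbedding

variable {i lam}

lemma lt_reflect_apply_self {x : EuclideanSpace ℝ (Fin n)} (hx : x ∈ sigmaSlab i lam) :
    lam < reflect i lam x i := by
  rw [reflect_apply_self]
  linarith [hx.2]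

lemma reflect_mem_halfSpace {x : EuclideanSpace ℝ (Fin n)} (hx : x ∈ sigmaSlab i lam) :
    reflect i lam x ∈ halfSpace i :=
  (hx.1.trans hx.2).trans (lt_reflect_apply_self hx)

lemma reflect_ne_of_mem_sigmaSlab {x y : EuclideanSpace ℝ (Fin n)} (hx : x ∈ sigmaSlab i lam)
    (hy : y ∈ sigmaSlab i lam) : reflect i lam x ≠ y := by
  rintro rfl
  exact (lt_reflect_apply_self hx).not_gt hy.2

end Reflection

section Fold

variable {i : Fin n} {lam : ℝ}

lemma isOpen_sigmaSlab : IsOpen (sigmaSlab i lam) := by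
  have h : Continuous fun z : EuclideanSpace ℝ (Fin n) => z i := by fun_prop
  exact (isOpen_lt continuous_const h).inter (isOpen_lt h continuous_const)

lemma measurableSet_le_apply : MeasurableSet {z : EuclideanSpace ℝ (Fin n) | lam ≤ z i} :=
  measurableSet_le measurable_const (by fun_prop)

lemma volume_sigmaSlab_pos (hlam : 0 < lam) : 0 < volume (sigmaSlab i lam) := by
  refine isOpen_sigmaSlab.measure_pos volume ⟨EuclideanSpace.single i (lam / 2), ?_⟩
  simp only [sigmaSlab, Set.mem_ofPred_eq, PiLp.single_apply, if_true]
  constructor <;> linarith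

lemma lt_apply_of_mem_preimage_reflect {z : EuclideanSpace ℝ (Fin n)}
    (hz : z ∈ reflect i lam ⁻¹' sigmaSlab i lam) : lam < z i := by
  simpa using lt_reflect_apply_self hz

lemma integrableOn_comp_reflect {f : EuclideanSpace ℝ (Fin n) → ℝ}
    (hf : IntegrableOn f (halfSpace i)) :
    IntegrableOn (fun z => f (reflect i lam z)) (sigmaSlab i lam) := by
  have hR : reflect i lam ⁻¹' sigmaSlab i lam ⊆ halfSpace i := fun z hz =>
    ((hz.1.trans hz.2).trans (lt_apply_of_mem_preimage_reflect hz) : _)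
  have := ((measurePreserving_reflect i lam).integrableOn_comp_preimage
    (measurableEmbedding_reflect i lam)).2 (hf.mono_set hR)
  rwa [← Set.preimage_comp, (reflect_involutive i lam).comp_self, Set.preimage_id] at this

lemma setIntegral_halfSpace_eq_fold (hlam : 0 < lam) {f : EuclideanSpace ℝ (Fin n) → ℝ}
    (hf : IntegrableOn f (halfSpace i)) :
    ∫ z in halfSpace i, f z = (∫ z in sigmaSlab i lam, (f z + f (reflect i lam z))) +
      ∫ z in {z | lam ≤ z i} \ reflect i lam ⁻¹' sigmaSlab i lam, f z := by
  set S := sigmaSlab i lam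
  set W := {z : EuclideanSpace ℝ (Fin n) | lam ≤ z i}
  have hH : halfSpace i = S ∪ W := by
    ext z
    simp only [halfSpace, S, W, sigmaSlab, Set.mem_union, Set.mem_ofPred_eq]
    constructor
    · intro hz
      exact (lt_or_ge (z i) lam).imp (fun h => ⟨hz, h⟩) id
    · rintro (hz | hz)
      exacts [hz.1, hlam.trans_le hz]
  have hSW : Disjoint S W := Set.disjoint_left.2 fun z hzS hzW => hzW.not_gt hzS.2
  have hRW : reflect i lam ⁻¹' S ⊆ W := fun z hz => (lt_apply_of_mem_preimage_reflect hz).le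
  have hfS : IntegrableOn f S := hf.mono_set (hH ▸ Set.subset_union_left)
  have hfW : IntegrableOn f W := hf.mono_set (hH ▸ Set.subset_union_right)
  have hR : ∫ z in reflect i lam ⁻¹' S, f z = ∫ z in S, f (reflect i lam z) := by
    simpa using (measurePreserving_reflect i lam).setIntegral_preimage_emb
      (measurableEmbedding_reflect i lam) (fun z => f (reflect i lam z)) S
  rw [hH, setIntegral_union hSW measurableSet_le_apply hfS hfW,
    setIntegral_sdiff ((measurePreserving_reflect i lam).measurable isOpen_sigmaSlab.measurableSet)
      hfW hRW, hR, integral_add hfS (integrableOn_comp_reflect hf)]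
  ring

lemma setIntegral_halfSpace_pos_of_fold (hlam : 0 < lam) {f : EuclideanSpace ℝ (Fin n) → ℝ}
    (hf : IntegrableOn f (halfSpace i))
    (hslab : ∀ᵐ z, z ∈ sigmaSlab i lam → 0 < f z + f (reflect i lam z))
    (hbeyond : ∀ᵐ z, lam ≤ z i → 0 ≤ f z) :
    0 < ∫ z in halfSpace i, f z := by
  rw [setIntegral_halfSpace_eq_fold hlam hf]
  refine add_pos_of_pos_of_nonneg ?_ ?_
  · have hg : 0 ≤ᵐ[volume.restrict (sigmaSlab i lam)] fun z => f z + f (reflect i lam z) :=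
      (ae_restrict_iff' isOpen_sigmaSlab.measurableSet).2 (hslab.mono fun z h hz => (h hz).le)
    refine (setIntegral_pos_iff_support_of_nonneg_ae hg
      ((hf.mono_set fun _ hz => hz.1).add (integrableOn_comp_reflect hf))).2 ?_
    refine (volume_sigmaSlab_pos (i := i) hlam).trans_le (measure_mono_ae ?_)
    exact hslab.mono fun z h hz => ⟨(h hz).ne', hz⟩
  · refine setIntegral_nonneg_of_ae_restrict (ae_restrict_of_ae_restrict_of_subset
      Set.sdiff_subset ?_)
    exact (ae_restrict_iff' measurableSet_le_apply).2 hbeyond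

end Fold

lemma mul_add_mul_pos_of_lt {a b a' b' : ℝ} (ha : 0 < a) (hb' : 0 < b') (haa' : a < a')
    (hbb' : 0 < b + b') : 0 < a * b + a' * b' := by
  have key : a * b + a' * b' = a * (b + b') + (a' - a) * b' := by ring
  rw [key]
  exact add_pos (mul_pos ha hbb') (mul_pos (sub_pos.2 haa') hb')

section Kernel

variable {i : Fin n}

def kernelComp (i : Fin n) (G₁ G₂ : EuclideanSpace ℝ (Fin n) → EuclideanSpace ℝ (Fin n) → ℝ)
    (x y : EuclideanSpace ℝ (Fin n)) : ℝ :=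
  ∫ z in halfSpace i, G₁ x z * G₂ z y

lemma kernelComp_swap (G₁ G₂ : EuclideanSpace ℝ (Fin n) → EuclideanSpace ℝ (Fin n) → ℝ) :
    kernelComp i (Function.swap G₂) (Function.swap G₁) = Function.swap (kernelComp i G₁ G₂) := by
  ext x y
  simp only [kernelComp, Function.swap, mul_comm]

lemma PropP2.swap {K : EuclideanSpace ℝ (Fin n) → EuclideanSpace ℝ (Fin n) → ℝ}
    (hK : PropP2 i K) : PropP2 i (Function.swap K) := fun lam hlam x hx y hy hxy => by
  simpa only [Function.swap, abs_sub_comm] using hK lam hlam y hy x hx hxy.symm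

lemma PropP3.swap {K : EuclideanSpace ℝ (Fin n) → EuclideanSpace ℝ (Fin n) → ℝ}
    (hK : PropP3 i K) : PropP3 i (Function.swap K) := fun lam hlam x hx y hy hyl hne =>
  (hK lam hlam x hx y hy hyl hne).symm

variable {G₁ G₂ : EuclideanSpace ℝ (Fin n) → EuclideanSpace ℝ (Fin n) → ℝ} {lam : ℝ}
  {x y : EuclideanSpace ℝ (Fin n)}

def crossIntegrand (i : Fin n) (G₁ G₂ : EuclideanSpace ℝ (Fin n) → EuclideanSpace ℝ (Fin n) → ℝ)
    (lam : ℝ) (x y z : EuclideanSpace ℝ (Fin n)) : ℝ :=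
  (G₁ (reflect i lam x) z + G₁ x z) * (G₂ z (reflect i lam y) - G₂ z y)

lemma crossIntegrand_nonneg (h₁pos : ∀ x ∈ halfSpace i, ∀ y ∈ halfSpace i, 0 < G₁ x y)
    (h₂ : PropP3 i G₂) (hlam : 0 < lam) (hx : x ∈ sigmaSlab i lam) (hy : y ∈ sigmaSlab i lam)
    {z : EuclideanSpace ℝ (Fin n)} (hz : lam ≤ z i) (hzy : z ≠ reflect i lam y) :
    0 ≤ crossIntegrand i G₁ G₂ lam x y z := by
  have hzH : z ∈ halfSpace i := hlam.trans_le hz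
  have ha := add_pos (h₁pos _ (reflect_mem_halfSpace hx) z hzH) (h₁pos x hx.1 z hzH)
  have hb := (h₂ lam hlam y hy z hzH hz hzy).2
  exact (mul_pos ha (sub_pos.2 hb)).le

lemma crossIntegrand_add_reflect_pos (h₁pos : ∀ x ∈ halfSpace i, ∀ y ∈ halfSpace i, 0 < G₁ x y)
    (h₁ : PropP2 i G₁) (h₂ : PropP2 i G₂) (h₂' : PropP3 i G₂) (hlam : 0 < lam)
    (hx : x ∈ sigmaSlab i lam) (hy : y ∈ sigmaSlab i lam) {z : EuclideanSpace ℝ (Fin n)}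
    (hz : z ∈ sigmaSlab i lam) (hzx : z ≠ x) (hzy : z ≠ y) :
    0 < crossIntegrand i G₁ G₂ lam x y z + crossIntegrand i G₁ G₂ lam x y (reflect i lam z) := by
  have hxr := reflect_mem_halfSpace hx
  have hzr := reflect_mem_halfSpace hz
  have ha := add_pos (h₁pos _ hxr z hz.1) (h₁pos x hx.1 z hz.1)
  have hb' := (h₂' lam hlam y hy _ hzr (lt_reflect_apply_self hz).le
    ((reflect_involutive i lam).injective.ne hzy)).2
  have haa' := abs_lt.1 (h₁ lam hlam x hx z hz hzx.symm)
  have hbb' := abs_lt.1 (h₂ lam hlam z hz y hy hzy)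
  exact mul_add_mul_pos_of_lt ha (sub_pos.2 hb') (by linarith) (by linarith)

lemma integrableOn_crossIntegrand_and_setIntegral_eq
    (hint : ∀ x ∈ halfSpace i, ∀ y ∈ halfSpace i, x ≠ y →
      IntegrableOn (fun z => G₁ x z * G₂ z y) (halfSpace i))
    (hx : x ∈ sigmaSlab i lam) (hy : y ∈ sigmaSlab i lam) (hxy : x ≠ y) :
    IntegrableOn (crossIntegrand i G₁ G₂ lam x y) (halfSpace i) ∧
    ∫ z in halfSpace i, crossIntegrand i G₁ G₂ lam x y z =
      kernelComp i G₁ G₂ (reflect i lam x) (reflect i lam y) - kernelComp i G₁ G₂ x y -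
        (kernelComp i G₁ G₂ (reflect i lam x) y - kernelComp i G₁ G₂ x (reflect i lam y)) := by
  have hxr := reflect_mem_halfSpace hx
  have hyr := reflect_mem_halfSpace hy
  have I₁ := hint _ hxr _ hyr ((reflect_involutive i lam).injective.ne hxy)
  have I₂ := hint _ hxr y hy.1 (reflect_ne_of_mem_sigmaSlab hx hy)
  have I₃ := hint x hx.1 _ hyr (reflect_ne_of_mem_sigmaSlab hy hx).symm
  have I₄ := hint x hx.1 y hy.1 hxy
  have hF : crossIntegrand i G₁ G₂ lam x y = fun z =>
      (G₁ (reflect i lam x) z * G₂ z (reflect i lam y) - G₁ (reflect i lam x) z * G₂ z y) +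
        (G₁ x z * G₂ z (reflect i lam y) - G₁ x z * G₂ z y) := by
    ext z
    simp only [crossIntegrand]
    ring
  have hsplit := integral_add (I₁.sub I₂) (I₃.sub I₄)
  simp only [Pi.sub_apply] at hsplit
  rw [integral_sub I₁ I₂, integral_sub I₃ I₄] at hsplit
  rw [hF]
  refine ⟨(I₁.sub I₂).add (I₃.sub I₄), ?_⟩
  rw [hsplit]
  simp only [kernelComp]
  ring

lemma kernelComp_sub_lt (h₁pos : ∀ x ∈ halfSpace i, ∀ y ∈ halfSpace i, 0 < G₁ x y)
    (h₁ : PropP2 i G₁) (h₂ : PropP2 i G₂) (h₂' : PropP3 i G₂)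
    (hint : ∀ x ∈ halfSpace i, ∀ y ∈ halfSpace i, x ≠ y →
      IntegrableOn (fun z => G₁ x z * G₂ z y) (halfSpace i))
    (hlam : 0 < lam) (hx : x ∈ sigmaSlab i lam) (hy : y ∈ sigmaSlab i lam) (hxy : x ≠ y) :
    kernelComp i G₁ G₂ (reflect i lam x) y - kernelComp i G₁ G₂ x (reflect i lam y) <
      kernelComp i G₁ G₂ (reflect i lam x) (reflect i lam y) - kernelComp i G₁ G₂ x y := by
  have : NullSingletonClass (volume : Measure (EuclideanSpace ℝ (Fin n))) :=
    have : Nonempty (Fin n) := ⟨i⟩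
    inferInstance
  obtain ⟨hFint, hFeq⟩ := integrableOn_crossIntegrand_and_setIntegral_eq hint hx hy hxy
  have hpos : 0 < ∫ z in halfSpace i, crossIntegrand i G₁ G₂ lam x y z := by
    refine setIntegral_halfSpace_pos_of_fold hlam hFint ?_ ?_
    · filter_upwards [Measure.ae_ne volume x, Measure.ae_ne volume y] with z hzx hzy hz
      exact crossIntegrand_add_reflect_pos h₁pos h₁ h₂ h₂' hlam hx hy hz hzx hzy
    · filter_upwards [Measure.ae_ne volume (reflect i lam y)] with z hzy hz
      exact crossIntegrand_nonneg h₁pos h₂' hlam hx hy hz hzy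
  linarith

end Kernel

theorem composed_kernel_P2_general
    (n : ℕ) (i : Fin n)
    (G₁ G₂ : EuclideanSpace ℝ (Fin n) → EuclideanSpace ℝ (Fin n) → ℝ)
    (h₁pos : ∀ x ∈ halfSpace i, ∀ y ∈ halfSpace i, 0 < G₁ x y)
    (h₂pos : ∀ x ∈ halfSpace i, ∀ y ∈ halfSpace i, 0 < G₂ x y)
    (h₁ : HasReflProps i G₁) (h₂ : HasReflProps i G₂)
    (hint : ∀ x ∈ halfSpace i, ∀ y ∈ halfSpace i, x ≠ y →
      IntegrableOn (fun z => G₁ x z * G₂ z y) (halfSpace i)) :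
    PropP2 i (fun x y => ∫ z in halfSpace i, G₁ x z * G₂ z y) := by
  obtain ⟨-, h₁P2, h₁P3⟩ := h₁
  obtain ⟨-, h₂P2, h₂P3⟩ := h₂
  have hint_swap : ∀ x ∈ halfSpace i, ∀ y ∈ halfSpace i, x ≠ y →
      IntegrableOn (fun z => Function.swap G₂ x z * Function.swap G₁ z y) (halfSpace i) :=
    fun x hx y hy hxy => by simpa only [Function.swap, mul_comm] using hint y hy x hx hxy.symm
  intro lam hlam x hx y hy hxy
  refine abs_sub_lt_iff.2 ⟨kernelComp_sub_lt h₁pos h₁P2 h₂P2 h₂P3 hint hlam hx hy hxy, ?_⟩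
  have h_swap := kernelComp_sub_lt (fun x hx y hy => h₂pos y hy x hx) h₂P2.swap h₁P2.swap h₁P3.swap
    hint_swap hlam hy hx hxy.symm
  rwa [kernelComp_swap] at h_swap

/-- the composed kernel `G(x,y) = ∫_{R^n_+} G₁(x,z) G₂(z,y) dz`
inherits property (P2). -/
theorem composed_kernel_P2
    (n : ℕ) (i : Fin n) (hi : (i : ℕ) = n - 1) (hn : 2 ≤ n)
    (G₁ G₂ : EuclideanSpace ℝ (Fin n) → EuclideanSpace ℝ (Fin n) → ℝ)
    (h₁pos : ∀ x ∈ halfSpace i, ∀ y ∈ halfSpace i, 0 < G₁ x y)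
    (h₂pos : ∀ x ∈ halfSpace i, ∀ y ∈ halfSpace i, 0 < G₂ x y)
    (h₁ : HasReflProps i G₁) (h₂ : HasReflProps i G₂)
    (hint : ∀ x ∈ halfSpace i, ∀ y ∈ halfSpace i, x ≠ y →
      IntegrableOn (fun z => G₁ x z * G₂ z y) (halfSpace i)) :
    PropP2 i (fun x y => ∫ z in halfSpace i, G₁ x z * G₂ z y) :=
  composed_kernel_P2_general n i G₁ G₂ h₁pos h₂pos h₁ h₂ hint
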